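/- Let l < 0 < u and suppose d ∈ [l, 0] satisfies the tangency condition tanh(u) − tanh(d) = (1 − tanh(d)²)(u − d). Then for every y ∈ [l, u], tanh(y) ≥ tanh(u) + (1 − tanh(d)²)(y − u); that is, the line through the right endpoint (u, tanh(u)) with slope tanh'(d) is a lower bound for tanh on [l, u]. -/

import Mathlib

/-!
The gap `g = tanh - T` between `tanh` and its tangent line `T` at `d` has derivative
`tanh d ^ 2 - tanh x ^ 2`, whose sign is that of `|d| - |x|`. For `d ≤ 0`, `g` therefore decreases
on `(-∞, d]`, increases on `[d, -d]` and decreases on `[-d, ∞)`. Since `g d = 0`, and `g u = 0` by the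
tangency condition, `g ≥ 0` on `(-∞, u]`.
-/

open Set

namespace Real

theorem hasDerivAt_tanh (x : ℝ) : HasDerivAt tanh (1 - tanh x ^ 2) x := by
  have h := (hasDerivAt_sinh x).div (hasDerivAt_cosh x) (cosh_pos x).ne'
  have hderiv : (cosh x * cosh x - sinh x * sinh x) / cosh x ^ 2 = 1 - tanh x ^ 2 := by
    rw [tanh_eq_sinh_div_cosh, div_pow]
    field_simp
  rw [hderiv] at h
  exact h.congr_of_eventuallyEq (.of_forall tanh_eq_sinh_div_cosh)

theorem tanh_strictMono : StrictMono tanh :=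
  strictMono_of_hasDerivAt_pos hasDerivAt_tanh fun x => sub_pos.2 (tanh_sq_lt_one x)

theorem tanh_abs_sq (x : ℝ) : tanh |x| ^ 2 = tanh x ^ 2 := by
  rcases abs_choice x with h | h <;> simp [h, tanh_neg]

theorem tanh_sq_le_tanh_sq_iff {x y : ℝ} : tanh x ^ 2 ≤ tanh y ^ 2 ↔ |x| ≤ |y| := by
  have tanh_abs_nonneg (z : ℝ) : 0 ≤ tanh |z| :=
    tanh_zero ▸ tanh_strictMono.monotone (abs_nonneg z)
  rw [← tanh_abs_sq x, ← tanh_abs_sq y,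
    pow_le_pow_iff_left₀ (tanh_abs_nonneg x) (tanh_abs_nonneg y) two_ne_zero,
    tanh_strictMono.le_iff_le]

end Real

open Real

noncomputable def tanhTangent (d x : ℝ) : ℝ := tanh d + (1 - tanh d ^ 2) * (x - d)

section TangentGap

variable (d : ℝ)

theorem hasDerivAt_tanhTangent (x : ℝ) : HasDerivAt (tanhTangent d) (1 - tanh d ^ 2) x :=
  (((hasDerivAt_id' x).sub_const d).const_mul (1 - tanh d ^ 2) |>.const_add (tanh d)).congr_deriv
    (mul_one _)

theorem hasDerivAt_tanh_sub_tanhTangent (x : ℝ) :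
    HasDerivAt (tanh - tanhTangent d) (tanh d ^ 2 - tanh x ^ 2) x :=
  ((hasDerivAt_tanh x).sub (hasDerivAt_tanhTangent d x)).congr_deriv (by ring)

theorem continuous_tanh_sub_tanhTangent : Continuous (tanh - tanhTangent d) :=
  continuous_iff_continuousAt.2 fun x => (hasDerivAt_tanh_sub_tanhTangent d x).continuousAt

theorem antitoneOn_tanh_sub_tanhTangent_Iic :
    AntitoneOn (tanh - tanhTangent d) (Iic (-|d|)) :=
  antitoneOn_of_hasDerivWithinAt_nonpos (convex_Iic _)
    (continuous_tanh_sub_tanhTangent d).continuousOn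
    (fun x _ => (hasDerivAt_tanh_sub_tanhTangent d x).hasDerivWithinAt) fun x hx => by
      have hx : x ≤ -|d| := (interior_subset hx : x ∈ Iic _)
      exact sub_nonpos.2 (tanh_sq_le_tanh_sq_iff.2 (by linarith [neg_le_abs x]))

theorem monotoneOn_tanh_sub_tanhTangent_Icc :
    MonotoneOn (tanh - tanhTangent d) (Icc (-|d|) |d|) :=
  monotoneOn_of_hasDerivWithinAt_nonneg (convex_Icc _ _)
    (continuous_tanh_sub_tanhTangent d).continuousOn
    (fun x _ => (hasDerivAt_tanh_sub_tanhTangent d x).hasDerivWithinAt) fun x hx => by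
      have hx : x ∈ Icc (-|d|) |d| := interior_subset hx
      exact sub_nonneg.2 (tanh_sq_le_tanh_sq_iff.2 (abs_le.2 hx))

theorem antitoneOn_tanh_sub_tanhTangent_Ici :
    AntitoneOn (tanh - tanhTangent d) (Ici |d|) :=
  antitoneOn_of_hasDerivWithinAt_nonpos (convex_Ici _)
    (continuous_tanh_sub_tanhTangent d).continuousOn
    (fun x _ => (hasDerivAt_tanh_sub_tanhTangent d x).hasDerivWithinAt) fun x hx => by
      have hx : |d| ≤ x := (interior_subset hx : x ∈ Ici _)
      exact sub_nonpos.2 (tanh_sq_le_tanh_sq_iff.2 (hx.trans (le_abs_self x)))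

end TangentGap

theorem tanhTangent_self (d : ℝ) : tanhTangent d d = tanh d := by
  simp [tanhTangent]

theorem tanhTangent_le_tanh {d u y : ℝ} (hd : d ≤ 0) (hu : tanhTangent d u = tanh u)
    (hy : y ≤ u) : tanhTangent d y ≤ tanh y := by
  have hgap_d : (tanh - tanhTangent d) d = 0 := sub_eq_zero.2 (tanhTangent_self d).symm
  have hgap_u : (tanh - tanhTangent d) u = 0 := sub_eq_zero.2 hu.symm
  suffices 0 ≤ (tanh - tanhTangent d) y from sub_nonneg.1 this
  have habs : |d| = -d := abs_of_nonpos hd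
  rcases le_total y d with hyd | hdy
  · rw [← hgap_d]
    exact antitoneOn_tanh_sub_tanhTangent_Iic d (by simpa [habs] using hyd)
      (by simp [habs]) hyd
  rcases le_total y (-d) with hy_le_neg | hneg_le_y
  · rw [← hgap_d]
    exact monotoneOn_tanh_sub_tanhTangent_Icc d (by simp [habs, hd]) (by simp [habs, hdy, hy_le_neg])
      hdy
  · rw [← hgap_u]
    exact antitoneOn_tanh_sub_tanhTangent_Ici d (by simpa [habs] using hneg_le_y)
      (by simpa [habs] using hneg_le_y.trans hy) hy

theorem tanh_crown_lower_unstable_general (l u d : ℝ)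
    (hd : d ∈ Set.Icc l 0)
    (htangent : Real.tanh u - Real.tanh d = (1 - Real.tanh d ^ 2) * (u - d)) :
    ∀ y ∈ Set.Icc l u,
      Real.tanh u + (1 - Real.tanh d ^ 2) * (y - u) ≤ Real.tanh y := by
  intro y hy
  have hline : tanh u + (1 - tanh d ^ 2) * (y - u) = tanhTangent d y := by
    unfold tanhTangent
    linear_combination htangent
  have hu : tanhTangent d u = tanh u := by
    unfold tanhTangent
    linear_combination -htangent
  exact hline ▸ tanhTangent_le_tanh hd.2 hu hy.2

/-- CROWN linear lower bound for an unstable tanh neuron (`l < 0 < u`): the line through the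
right endpoint `(u, tanh u)` with slope `tanh' d = 1 - tanh d ^ 2`, where `d ∈ [l, 0]` is the
tangency point, is a lower bound for `tanh` on `[l, u]`. -/
theorem tanh_crown_lower_unstable (l u d : ℝ) (hl : l < 0) (hu : 0 < u)
    (hd : d ∈ Set.Icc l 0)
    (htangent : Real.tanh u - Real.tanh d = (1 - Real.tanh d ^ 2) * (u - d)) :
    ∀ y ∈ Set.Icc l u,
      Real.tanh u + (1 - Real.tanh d ^ 2) * (y - u) ≤ Real.tanh y :=
  tanh_crown_lower_unstable_general l u d hd htangent
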